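/- arXiv:2110.02730 — 6 statements merged into one kernel-verified Lean document; each statement's English description precedes it below -/
import Mathlib

section
/- Let p be prime, q, t natural numbers, and J_t the q-color compatibility matrix of a perfect matching with t edges (J_t[x,y] = 1 if x(i) ≠ y(i) for all i, else 0, indexed by x,y : Fin t → Fin q). Then the rank of J_t over F_p equals (q−1)^t if p divides q−1, and equals q^t otherwise. -/
/-!
Over any field `K`, `J_t` is the `t`-fold Kronecker power of `J_1 = 𝟙 - I` (with `𝟙` the all-ones
matrix), and Kronecker powers are multiplicative. Since `𝟙² = q 𝟙`, one gets
`J_1 (J_1 - (q - 2) I) = (q - 1) I`, so `J_1` and hence `J_t` is invertible when `q ≠ 1` in `K`.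
When `q = 1` in `K`, the columns of `J_1` sum to `0`, so `J_1 = C M` with `M` its first `q - 1`
rows; then `J_t = C^{⊗t} M^{⊗t}` has rank at most `(q - 1)^t`. Conversely the principal
`(q - 1) × (q - 1)` minor of `J_1` is `J_1` for `q - 1` colours, invertible because `q - 1 = 0 ≠ 1`,
so its Kronecker power is an invertible `(q - 1)^t × (q - 1)^t` submatrix of `J_t`.
-/

open Finset

namespace Matrix

section KroneckerPi

variable {ι k m n o R : Type*} [Fintype ι]

def kroneckerPi (ι : Type*) [Fintype ι] [CommMonoid R] (A : Matrix m n R) :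
    Matrix (ι → m) (ι → n) R :=
  of fun x y => ∏ i, A (x i) (y i)

variable [CommSemiring R]

theorem kroneckerPi_mul [DecidableEq ι] [Fintype n] (A : Matrix m n R) (B : Matrix n o R) :
    kroneckerPi ι (A * B) = kroneckerPi ι A * kroneckerPi ι B := by
  ext x z
  simp only [kroneckerPi, mul_apply, of_apply, prod_univ_sum, Fintype.piFinset_univ,
    prod_mul_distrib]

theorem kroneckerPi_one [DecidableEq m] : kroneckerPi ι (1 : Matrix m m R) = 1 := by
  ext x y
  simp [kroneckerPi, one_apply, prod_boole, funext_iff]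

theorem kroneckerPi_submatrix (A : Matrix m n R) (f : k → m) (g : o → n) :
    kroneckerPi ι (A.submatrix f g) = (kroneckerPi ι A).submatrix (f ∘ ·) (g ∘ ·) :=
  rfl

theorem isUnit_kroneckerPi [DecidableEq ι] [Fintype m] [DecidableEq m] {A : Matrix m m R}
    (hA : IsUnit A) : IsUnit (kroneckerPi ι A) := by
  obtain ⟨u, rfl⟩ := hA
  refine ⟨⟨kroneckerPi ι u, kroneckerPi ι ↑u⁻¹, ?_, ?_⟩, rfl⟩ <;>
    simp [← kroneckerPi_mul, kroneckerPi_one]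

variable [StrongRankCondition R]

theorem rank_kroneckerPi_of_isUnit [DecidableEq ι] [Fintype m] [DecidableEq m]
    {A : Matrix m m R} (hA : IsUnit A) :
    (kroneckerPi ι A).rank = Fintype.card m ^ Fintype.card ι := by
  rw [rank_of_isUnit _ (isUnit_kroneckerPi hA), Fintype.card_fun]

theorem rank_kroneckerPi_mul_le [DecidableEq ι] [Fintype k] [Fintype n] (B : Matrix m k R)
    (C : Matrix k n R) : (kroneckerPi ι (B * C)).rank ≤ Fintype.card k ^ Fintype.card ι := by
  rw [kroneckerPi_mul, ← Fintype.card_fun]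
  exact (rank_mul_le_left _ _).trans (rank_le_card_width _)

theorem le_rank_kroneckerPi_of_isUnit_submatrix [DecidableEq ι] [Fintype k] [DecidableEq k]
    [Fintype n] (A : Matrix m n R) (f : k → m) (g : k → n) (h : IsUnit (A.submatrix f g)) :
    Fintype.card k ^ Fintype.card ι ≤ (kroneckerPi ι A).rank := by
  rw [← rank_kroneckerPi_of_isUnit h, kroneckerPi_submatrix]
  exact rank_submatrix_le _ _ _

end KroneckerPi

theorem eq_mul_submatrix_castSucc_of_sum_eq_zero {r : ℕ} {n R : Type*} [Ring R]
    (A : Matrix (Fin (r + 1)) n R) (h : ∀ c, ∑ a, A a c = 0) :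
    A = of (fun a b => if a = Fin.castSucc b then (1 : R) else if a = Fin.last r then -1 else 0) *
      A.submatrix Fin.castSucc id := by
  ext a c
  obtain ⟨a, rfl⟩ | rfl := a.eq_castSucc_or_eq_last
  · simp [mul_apply, Fin.castSucc_ne_last]
  · have hc := h c
    rw [Fin.sum_univ_castSucc, add_eq_zero_iff_neg_eq'] at hc
    simp [mul_apply, ← hc, (Fin.castSucc_ne_last _).symm]

section CompatMatrix

variable (n R : Type*) [DecidableEq n]

def compatMatrix [Zero R] [One R] : Matrix n n R :=
  of fun a b => if a ≠ b then 1 else 0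

variable {n R}

theorem compatMatrix_eq_of_one_sub_one [Ring R] :
    compatMatrix n R = of (fun _ _ => 1) - 1 := by
  ext a b
  by_cases h : a = b <;> simp [compatMatrix, h]

theorem compatMatrix_submatrix {m : Type*} [DecidableEq m] [Zero R] [One R] {f : m → n}
    (hf : Function.Injective f) : (compatMatrix n R).submatrix f f = compatMatrix m R := by
  ext a b
  simp only [compatMatrix, submatrix_apply, of_apply, hf.ne_iff]

theorem kroneckerPi_compatMatrix_apply {ι : Type*} [Fintype ι] [CommSemiring R] (x y : ι → n) :
    kroneckerPi ι (compatMatrix n R) x y = if ∀ i, x i ≠ y i then 1 else 0 := by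
  simp only [kroneckerPi, compatMatrix, of_apply, prod_boole, mem_univ, true_implies]

variable [Fintype n]

theorem sum_compatMatrix_apply [Ring R] (c : n) :
    ∑ a, compatMatrix n R a c = Fintype.card n - 1 := by
  simp [compatMatrix_eq_of_one_sub_one, sum_sub_distrib, one_apply]

theorem compatMatrix_mul_self [CommRing R] :
    compatMatrix n R * compatMatrix n R =
      ((Fintype.card n : R) - 2) • compatMatrix n R + ((Fintype.card n : R) - 1) • 1 := by
  have hJ : (of fun _ _ => 1 : Matrix n n R) * of (fun _ _ => 1) =
      (Fintype.card n : R) • of fun _ _ => 1 := by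
    ext; simp [mul_apply]
  rw [compatMatrix_eq_of_one_sub_one, sub_mul, mul_sub, mul_sub, hJ, mul_one, one_mul, mul_one]
  module

variable {K : Type*} [Field K]

theorem isUnit_compatMatrix (h : (Fintype.card n : K) ≠ 1) : IsUnit (compatMatrix n K) := by
  have hq : (Fintype.card n : K) - 1 ≠ 0 := sub_ne_zero.2 h
  refine .of_mul_eq_one
    (((Fintype.card n : K) - 1)⁻¹ • (compatMatrix n K - ((Fintype.card n : K) - 2) • 1)) ?_
  rw [Matrix.mul_smul, Matrix.mul_sub, compatMatrix_mul_self, Matrix.mul_smul, mul_one, add_sub_cancel_left,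
    smul_smul, inv_mul_cancel₀ hq, one_smul]

variable {ι : Type*} [Fintype ι] [DecidableEq ι]

theorem rank_kroneckerPi_compatMatrix_of_natCast_ne_one (h : (Fintype.card n : K) ≠ 1) :
    (kroneckerPi ι (compatMatrix n K)).rank = Fintype.card n ^ Fintype.card ι :=
  rank_kroneckerPi_of_isUnit (isUnit_compatMatrix h)

theorem rank_kroneckerPi_compatMatrix_of_natCast_eq_one {q : ℕ} (hq : (q : K) = 1) :
    (kroneckerPi ι (compatMatrix (Fin q) K)).rank = (q - 1) ^ Fintype.card ι := by
  obtain ⟨r, rfl⟩ : ∃ r, q = r + 1 := Nat.exists_eq_succ_of_ne_zero (by rintro rfl; simp at hq)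
  have hr : (r : K) = 0 := by simpa using hq
  rw [Nat.add_sub_cancel]
  apply le_antisymm
  · have hsum : ∀ c, ∑ a, compatMatrix (Fin (r + 1)) K a c = 0 := by
      simp [sum_compatMatrix_apply, hr]
    rw [eq_mul_submatrix_castSucc_of_sum_eq_zero _ hsum]
    simpa using rank_kroneckerPi_mul_le (ι := ι) (k := Fin r) _ _
  · have hminor : IsUnit ((compatMatrix (Fin (r + 1)) K).submatrix Fin.castSucc Fin.castSucc) := by
      rw [compatMatrix_submatrix (Fin.castSucc_injective r)]
      exact isUnit_compatMatrix (by simp [hr])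
    simpa using le_rank_kroneckerPi_of_isUnit_submatrix (ι := ι) _ _ _ hminor

end CompatMatrix

end Matrix

open Matrix in
/-- The rank over F_p of the compatibility matrix J_t of a perfect matching on t edges
with q colors is (q−1)^t if p divides q−1, and q^t otherwise. -/
theorem stmt4 (p q t : ℕ) [Fact p.Prime]
    (Jt : Matrix (Fin t → Fin q) (Fin t → Fin q) (ZMod p))
    (hJt : ∀ x y, Jt x y = if ∀ i, x i ≠ y i then 1 else 0) :
    ((p : ℤ) ∣ (q : ℤ) - 1 → Jt.rank = (q - 1) ^ t) ∧
    (¬ (p : ℤ) ∣ (q : ℤ) - 1 → Jt.rank = q ^ t) := by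
  obtain rfl : Jt = kroneckerPi (Fin t) (compatMatrix (Fin q) (ZMod p)) := by
    ext x y
    simp [hJt, kroneckerPi_compatMatrix_apply]
  have hdvd : (p : ℤ) ∣ (q : ℤ) - 1 ↔ (q : ZMod p) = 1 := by
    rw [← ZMod.intCast_zmod_eq_zero_iff_dvd, Int.cast_sub, Int.cast_natCast, Int.cast_one,
      sub_eq_zero]
  refine ⟨fun h => ?_, fun h => ?_⟩
  · simpa using rank_kroneckerPi_compatMatrix_of_natCast_eq_one (ι := Fin t) (hdvd.1 h)
  · simpa using rank_kroneckerPi_compatMatrix_of_natCast_ne_one (ι := Fin t) (n := Fin q)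
      (by simpa [hdvd] using h)
end

section
/- Let G = (X ∪ Y, E) be a bipartite graph with parts X and Y, |E| = t, and let M be its q-th color compatibility matrix over F_p: M is indexed by colorings x : X → Fin q and y : Y → Fin q, with M[x,y] = 1 if x(u) ≠ y(v) for every edge uv ∈ E (u ∈ X, v ∈ Y), and 0 otherwise. Then rank_{F_p}(M) ≤ (q−1)^t if p divides q−1, and rank_{F_p}(M) ≤ q^t otherwise. -/
/-!
Up to identifying vertices, `M` is a submatrix of the `t`-fold Kronecker power of the
`q × q` matrix `J - I`, which is the compatibility matrix of a perfect matching on `t` edges.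
A rank factorization `J - I = B * C` tensors to a factorization of the Kronecker power, so its
rank is at most `rank (J - I) ^ t`. Finally `rank (J - I) ≤ q`, and when `q ≡ 1 (mod p)` the
all-ones row vector lies in the left kernel of `J - I`, so then `rank (J - I) ≤ q - 1`.
-/

open Finset

namespace Matrix

variable {m n α β K : Type*}

theorem exists_mul_eq_of_rank [Field K] [Fintype n] (A : Matrix m n K) :
    ∃ (B : Matrix m (Fin A.rank) K) (C : Matrix (Fin A.rank) n K), B * C = A := by
  set V := Submodule.span K (Set.range A.col)
  have : Module.Finite K V := Module.Finite.span_of_finite K (Set.finite_range A.col)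
  let b : Module.Basis (Fin A.rank) K V :=
    Module.finBasisOfFinrankEq K V A.rank_eq_finrank_span_cols.symm
  refine ⟨of fun i k => (b k : m → K) i,
    of fun k j => b.repr ⟨A.col j, Submodule.subset_span ⟨j, rfl⟩⟩ k, ?_⟩
  ext i j
  have hcol := congrArg (fun v : V => (v : m → K) i)
    (b.sum_repr ⟨A.col j, Submodule.subset_span ⟨j, rfl⟩⟩)
  simp only [Submodule.coe_sum, Submodule.coe_smul, Finset.sum_apply, Pi.smul_apply,
    smul_eq_mul, col_apply] at hcol
  rw [mul_apply, ← hcol]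
  exact sum_congr rfl fun _ _ => mul_comm _ _

def kroneckerPower [CommMonoid K] (D : Matrix α β K) (ι : Type*) [Fintype ι] :
    Matrix (ι → α) (ι → β) K :=
  of fun x y => ∏ i, D (x i) (y i)

theorem kroneckerPower_mul {γ : Type*} [CommSemiring K] [Fintype β] (ι : Type*) [Fintype ι]
    [DecidableEq ι] (B : Matrix α β K) (C : Matrix β γ K) :
    kroneckerPower (B * C) ι = kroneckerPower B ι * kroneckerPower C ι := by
  ext x z
  simp only [kroneckerPower, of_apply, mul_apply, Fintype.prod_sum, ← prod_mul_distrib]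

theorem rank_kroneckerPower_le [Field K] [Fintype β] (ι : Type*) [Fintype ι] [DecidableEq ι]
    (D : Matrix α β K) : (kroneckerPower D ι).rank ≤ D.rank ^ Fintype.card ι := by
  obtain ⟨B, C, hBC⟩ := D.exists_mul_eq_of_rank
  calc (kroneckerPower D ι).rank
      = (kroneckerPower B ι * kroneckerPower C ι).rank := by rw [← kroneckerPower_mul, hBC]
    _ ≤ (kroneckerPower B ι).rank := rank_mul_le_left _ _
    _ ≤ Fintype.card (ι → Fin D.rank) := rank_le_card_width _
    _ = D.rank ^ Fintype.card ι := by simp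

def offDiagonalOnes (α K : Type*) [DecidableEq α] [Zero K] [One K] : Matrix α α K :=
  of fun a b => if a ≠ b then 1 else 0

theorem rank_offDiagonalOnes_le [Field K] [Fintype α] [DecidableEq α]
    (h : (Fintype.card α : K) = 1) : (offDiagonalOnes α K).rank ≤ Fintype.card α - 1 := by
  have hne : Nonempty α :=
    Fintype.card_pos_iff.mp (Nat.pos_of_ne_zero fun h0 => by simp [h0] at h)
  let ones : Matrix Unit α K := of fun _ _ => 1
  have hones : ones * offDiagonalOnes α K = 0 := by
    ext _ b
    simp [ones, offDiagonalOnes, mul_apply, Finset.sum_ite, Finset.filter_ne',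
      Nat.cast_sub Fintype.card_pos, h]
  have hrank : ones.rank = 1 := by
    have hrow : ones.row default ≠ 0 := fun h0 => by
      obtain ⟨a⟩ := hne
      simpa [ones] using congrFun h0 a
    exact (linearIndependent_unique_iff.mpr hrow).rank_matrix
  have := rank_add_rank_le_card_of_mul_eq_zero hones
  omega

theorem rank_of_prod_edges_le {X Y α β K : Type*} [Field K] [Fintype Y] [DecidableEq Y]
    [Fintype β] (E : Finset (X × Y)) (D : Matrix α β K) :
    (of fun (x : X → α) (y : Y → β) => ∏ e ∈ E, D (x e.1) (y e.2)).rank ≤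
      D.rank ^ #E := by
  classical
  have hsub : (of fun (x : X → α) (y : Y → β) => ∏ e ∈ E, D (x e.1) (y e.2)) =
      (kroneckerPower D E).submatrix (fun x e => x e.1.1) (fun y e => y e.1.2) := by
    ext x y
    simp only [kroneckerPower, of_apply, submatrix_apply]
    exact (prod_coe_sort E fun e => D (x e.1) (y e.2)).symm
  rw [hsub]
  calc _ ≤ (kroneckerPower D E).rank := rank_submatrix_le _ _ _
    _ ≤ D.rank ^ #E := by simpa using rank_kroneckerPower_le E D

end Matrix

open Matrix

/-- Rank bound for the color compatibility matrix of a bipartite graph with t edges: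
at most (q−1)^t over F_p if p ∣ q−1, and at most q^t otherwise. -/
theorem stmt5 (p q : ℕ) [Fact p.Prime] {X Y : Type*}
    [Fintype X] [Fintype Y] [DecidableEq X] [DecidableEq Y]
    (E : Finset (X × Y))
    (M : Matrix (X → Fin q) (Y → Fin q) (ZMod p))
    (hM : ∀ x y, M x y = if ∀ e ∈ E, x e.1 ≠ y e.2 then 1 else 0) :
    ((p : ℤ) ∣ (q : ℤ) - 1 → M.rank ≤ (q - 1) ^ E.card) ∧
    (¬ (p : ℤ) ∣ (q : ℤ) - 1 → M.rank ≤ q ^ E.card) := by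
  have hM' : M = of fun x y => ∏ e ∈ E, offDiagonalOnes (Fin q) (ZMod p) (x e.1) (y e.2) := by
    ext x y
    simp only [hM, offDiagonalOnes, of_apply, prod_boole]
    -- the two `ite`s differ only in their `Decidable` instances
    congr
  have hrank := hM' ▸ rank_of_prod_edges_le E (offDiagonalOnes (Fin q) (ZMod p))
  refine ⟨fun hdvd => hrank.trans (Nat.pow_le_pow_left ?_ _),
    fun _ => hrank.trans (Nat.pow_le_pow_left ?_ _)⟩
  · have hq : ((Fintype.card (Fin q) : ℕ) : ZMod p) = 1 := by
      rw [Fintype.card_fin, ← sub_eq_zero]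
      exact_mod_cast (ZMod.intCast_zmod_eq_zero_iff_dvd _ p).mpr hdvd
    simpa using rank_offDiagonalOnes_le hq
  · simpa using rank_le_card_width (offDiagonalOnes (Fin q) (ZMod p))
end

section
/- Identifying two vertices u, v on the same side X of a bipartite graph transforms the color compatibility matrix by restricting to the rows indexed by colorings x : X → Fin q with x(u) = x(v). Consequently, if a bipartite graph G is obtained from a bipartite graph H by identifying vertices within sides, then the color compatibility matrix of G is a submatrix of that of H, and hence rank(M_G) ≤ rank(M_H) over any field. -/
open Matrix

/-- Identifying vertices within the sides of a bipartite graph (via maps f, g) turns the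
color compatibility matrix of the new graph into a submatrix of the original one, so the
rank can only decrease. -/
theorem stmt6 {K : Type*} [Field K] (q : ℕ)
    {X Y X' Y' : Type*} [Fintype X] [Fintype Y] [Fintype X'] [Fintype Y']
    [DecidableEq X] [DecidableEq Y] [DecidableEq X'] [DecidableEq Y']
    (f : X → X') (g : Y → Y') (E : Finset (X × Y))
    (MH : Matrix (X → Fin q) (Y → Fin q) K)
    (hMH : ∀ x y, MH x y = if ∀ e ∈ E, x e.1 ≠ y e.2 then 1 else 0)
    (MG : Matrix (X' → Fin q) (Y' → Fin q) K)
    (hMG : ∀ x y, MG x y = if ∀ e ∈ E, x (f e.1) ≠ y (g e.2) then 1 else 0) :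
    MG = MH.submatrix (fun x : X' → Fin q => x ∘ f) (fun y : Y' → Fin q => y ∘ g) ∧
    MG.rank ≤ MH.rank := by
  have hMG_eq : MG = MH.submatrix (· ∘ f) (· ∘ g) := by
    ext x y
    rw [hMG, submatrix_apply, hMH]
    rfl
  exact ⟨hMG_eq, hMG_eq ▸ rank_submatrix_le MH _ _⟩
end

section
/- Let G be a graph with vertex ordering v_1,…,v_n, G_i the subgraph induced on {v_1,…,v_i}, and X_i the set of vertices of G_i with a neighbor among {v_{i+1},…,v_n} together with v_i. For lists L : V → Finset (Fin q), let col(A) denote the list colorings of G[A] and T_i[x] the number of list colorings of G_i whose restriction to X_i equals x. Then for every list coloring x of G[X_i], T_i[x] = Σ_{z ∈ col(X_{i−1}), z ∼ x} T_{i−1}[z], where z ∼ x means z and x agree on X_{i−1} ∩ X_i and assign different colors to endpoints of any edge between X_{i−1} and X_i. -/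
open Classical

/-- The first i vertices v_1, …, v_i of the ordering (0-based values < i). -/
def verts (n : ℕ) (i : ℕ) : Finset (Fin n) :=
  Finset.univ.filter fun v => v.val < i

/-- X_i = L_i ∪ {v_i}: vertices among v_1,…,v_i with a neighbor among v_{i+1},…,v_n,
together with v_i itself. -/
noncomputable def Xset (n : ℕ) (G : SimpleGraph (Fin n)) (i : ℕ) : Finset (Fin n) :=
  Finset.univ.filter fun v =>
    v.val < i ∧ (v.val = i - 1 ∨ ∃ w : Fin n, G.Adj v w ∧ i ≤ w.val)

/-- A list q-coloring of the subgraph of G induced on the vertex set A. -/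
def IsCol (n q : ℕ) (G : SimpleGraph (Fin n)) (L : Fin n → Finset (Fin q))
    (A : Finset (Fin n)) (c : {v // v ∈ A} → Fin q) : Prop :=
  (∀ v, c v ∈ L v.1) ∧ ∀ u v : {v // v ∈ A}, G.Adj u.1 v.1 → c u ≠ c v

/-- T_i[x] : the number of list colorings of G_i whose restriction to X_i equals x. -/
noncomputable def T (n q : ℕ) (G : SimpleGraph (Fin n)) (L : Fin n → Finset (Fin q))
    (i : ℕ) (x : {v // v ∈ Xset n G i} → Fin q) : ℕ :=
  Nat.card {c : {v // v ∈ verts n i} → Fin q //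
    IsCol n q G L (verts n i) c ∧
    ∀ (v : Fin n) (hx : v ∈ Xset n G i) (hv : v ∈ verts n i), c ⟨v, hv⟩ = x ⟨v, hx⟩}

/-- z ∼ x : z and x agree on X_{i−1} ∩ X_i and assign different colors to the endpoints
of any edge between X_{i−1} and X_i. -/
def Compat (n q : ℕ) (G : SimpleGraph (Fin n)) (i : ℕ)
    (z : {v // v ∈ Xset n G (i - 1)} → Fin q)
    (x : {v // v ∈ Xset n G i} → Fin q) : Prop :=
  (∀ (v : Fin n) (h1 : v ∈ Xset n G (i - 1)) (h2 : v ∈ Xset n G i),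
      z ⟨v, h1⟩ = x ⟨v, h2⟩) ∧
  (∀ (u v : Fin n) (h1 : u ∈ Xset n G (i - 1)) (h2 : v ∈ Xset n G i),
      G.Adj u v → z ⟨u, h1⟩ ≠ x ⟨v, h2⟩)

lemma mem_verts_iff {n i : ℕ} {v : Fin n} : v ∈ verts n i ↔ v.val < i := by
  simp [verts]

lemma mem_Xset_iff {n : ℕ} {G : SimpleGraph (Fin n)} {i : ℕ} {v : Fin n} :
    v ∈ Xset n G i ↔ v.val < i ∧ (v.val = i - 1 ∨ ∃ w : Fin n, G.Adj v w ∧ i ≤ w.val) := by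
  simp [Xset]

lemma Xset_sub {n : ℕ} {G : SimpleGraph (Fin n)} {i : ℕ} {v : Fin n}
    (h : v ∈ Xset n G i) : v ∈ verts n i :=
  mem_verts_iff.mpr (mem_Xset_iff.mp h).1

lemma verts_sub {n i : ℕ} {v : Fin n} (h : v ∈ verts n (i-1)) : v ∈ verts n i := by
  rw [mem_verts_iff] at *; omega

lemma Xprev_mem {n : ℕ} {G : SimpleGraph (Fin n)} {i : ℕ} {u v : Fin n}
    (hu : u ∈ verts n (i-1)) (hadj : G.Adj u v) (hv : i - 1 ≤ v.val) :
    u ∈ Xset n G (i-1) :=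
  mem_Xset_iff.mpr ⟨mem_verts_iff.mp hu, Or.inr ⟨v, hadj, hv⟩⟩

/-- last vertex membership in X_i -/
lemma last_mem_Xset {n : ℕ} {G : SimpleGraph (Fin n)} {i : ℕ} {v : Fin n}
    (hv : v ∈ verts n i) (h : ¬ v.val < i - 1) : v ∈ Xset n G i := by
  rw [mem_verts_iff] at hv
  exact mem_Xset_iff.mpr ⟨hv, Or.inl (by omega)⟩

/-- T as a Finset.card -/
lemma T_card (n q : ℕ) (G : SimpleGraph (Fin n)) (L : Fin n → Finset (Fin q))
    (j : ℕ) (y : {v // v ∈ Xset n G j} → Fin q) :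
    T n q G L j y = (Finset.univ.filter (fun c : {v // v ∈ verts n j} → Fin q =>
      IsCol n q G L (verts n j) c ∧
      ∀ (v : Fin n) (hx : v ∈ Xset n G j) (hv : v ∈ verts n j),
        c ⟨v, hv⟩ = y ⟨v, hx⟩)).card := by
  classical
  rw [T, Nat.card_eq_fintype_card, Fintype.card_subtype]

/-- The folklore dynamic-programming recurrence:
T_i[x] = Σ_{z ∈ col(X_{i−1}), z ∼ x} T_{i−1}[z]. -/
theorem stmt7 (n q : ℕ) (G : SimpleGraph (Fin n)) (L : Fin n → Finset (Fin q))
    (i : ℕ) (hi : 1 ≤ i) (hin : i ≤ n)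
    (x : {v // v ∈ Xset n G i} → Fin q)
    (hx : IsCol n q G L (Xset n G i) x) :
    T n q G L i x =
      ∑ z ∈ Finset.univ.filter (fun z : {v // v ∈ Xset n G (i - 1)} → Fin q =>
          IsCol n q G L (Xset n G (i - 1)) z ∧ Compat n q G i z x),
        T n q G L (i - 1) z := by
  classical
  -- restriction maps
  set res : ({v // v ∈ verts n i} → Fin q) → ({v // v ∈ Xset n G (i-1)} → Fin q) :=
    fun c z => c ⟨z.1, verts_sub (Xset_sub z.2)⟩ with hres
  rw [T_card]
  have H : ∀ c ∈ Finset.univ.filter (fun c : {v // v ∈ verts n i} → Fin q =>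
      IsCol n q G L (verts n i) c ∧
      ∀ (v : Fin n) (hxm : v ∈ Xset n G i) (hv : v ∈ verts n i),
        c ⟨v, hv⟩ = x ⟨v, hxm⟩),
      res c ∈ Finset.univ.filter (fun z : {v // v ∈ Xset n G (i - 1)} → Fin q =>
          IsCol n q G L (Xset n G (i - 1)) z ∧ Compat n q G i z x) := by
    intro c hc
    rw [Finset.mem_filter] at hc
    obtain ⟨-, ⟨hcL, hcAdj⟩, hcx⟩ := hc
    rw [Finset.mem_filter]
    refine ⟨Finset.mem_univ _, ⟨fun v => hcL _, fun u v hadj => hcAdj _ _ hadj⟩, ?_, ?_⟩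
    · intro v h1 h2
      exact hcx v h2 _
    · intro u v h1 h2 hadj
      rw [← hcx v h2 (Xset_sub h2)]
      exact hcAdj ⟨u, verts_sub (Xset_sub h1)⟩ ⟨v, Xset_sub h2⟩ hadj
  rw [Finset.card_eq_sum_card_fiberwise H]
  refine Finset.sum_congr rfl ?_
  intro z hz
  rw [Finset.mem_filter] at hz
  obtain ⟨-, ⟨hzL, hzAdj⟩, hzAgree, hzEdge⟩ := hz
  rw [T_card]
  refine Finset.card_bij'
    (fun c _ => fun v => c ⟨v.1, verts_sub v.2⟩)
    (fun c' _ => fun v => if h : v.1.val < i - 1 then c' ⟨v.1, mem_verts_iff.mpr h⟩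
      else x ⟨v.1, last_mem_Xset v.2 h⟩) ?_ ?_ ?_ ?_
  · -- forward map lands in target
    intro c hc
    rw [Finset.mem_filter, Finset.mem_filter] at hc
    obtain ⟨⟨-, ⟨hcL, hcAdj⟩, hcx⟩, hcz⟩ := hc
    rw [Finset.mem_filter]
    refine ⟨Finset.mem_univ _, ⟨fun v => hcL _, fun u v hadj => hcAdj _ _ hadj⟩, ?_⟩
    intro v hvx hvv
    have := congrFun hcz ⟨v, hvx⟩
    exact this
  · -- backward map lands in source
    intro c' hc'
    rw [Finset.mem_filter] at hc'
    obtain ⟨-, ⟨hcL, hcAdj⟩, hcz⟩ := hc'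
    rw [Finset.mem_filter, Finset.mem_filter]
    have key : ∀ (v : Fin n) (hv : v ∈ verts n i) (h : v.val < i - 1)
        (hvx : v ∈ Xset n G (i-1)),
        c' ⟨v, mem_verts_iff.mpr h⟩ = z ⟨v, hvx⟩ := fun v hv h hvx =>
      hcz v hvx _
    refine ⟨⟨Finset.mem_univ _, ⟨?_, ?_⟩, ?_⟩, ?_⟩
    · intro v
      by_cases h : v.1.val < i - 1
      · simp only [dif_pos h]; exact hcL _
      · simp only [dif_neg h]; exact hx.1 _
    · intro u v hadj
      by_cases hu : u.1.val < i - 1 <;> by_cases hv : v.1.val < i - 1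
      · simp only [dif_pos hu, dif_pos hv]
        exact hcAdj ⟨u.1, mem_verts_iff.mpr hu⟩ ⟨v.1, mem_verts_iff.mpr hv⟩ hadj
      · simp only [dif_pos hu, dif_neg hv]
        have hux : u.1 ∈ Xset n G (i-1) :=
          Xprev_mem (mem_verts_iff.mpr hu) hadj (by
            have := mem_verts_iff.mp v.2; omega)
        rw [key u.1 u.2 hu hux]
        exact hzEdge u.1 v.1 hux (last_mem_Xset v.2 hv) hadj
      · simp only [dif_neg hu, dif_pos hv]
        have hvx : v.1 ∈ Xset n G (i-1) :=
          Xprev_mem (mem_verts_iff.mpr hv) hadj.symm (by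
            have := mem_verts_iff.mp u.2; omega)
        rw [key v.1 v.2 hv hvx]
        exact (hzEdge v.1 u.1 hvx (last_mem_Xset u.2 hu) hadj.symm).symm
      · exfalso
        have : u.1 = v.1 := Fin.ext (by
          have h1 := mem_verts_iff.mp u.2
          have h2 := mem_verts_iff.mp v.2
          omega)
        rw [this] at hadj
        exact G.irrefl hadj
    · -- restriction to X_i equals x
      intro v hvx hvv
      by_cases h : v.val < i - 1
      · simp only [dif_pos h]
        have hvprev : v ∈ Xset n G (i-1) := by
          rcases (mem_Xset_iff.mp hvx).2 with h1 | ⟨w, hw1, hw2⟩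
          · omega
          · exact mem_Xset_iff.mpr ⟨h, Or.inr ⟨w, hw1, by omega⟩⟩
        rw [key v hvv h hvprev]
        exact hzAgree v hvprev hvx
      · simp only [dif_neg h]
    · -- res of extension = z
      funext v
      have hlt : v.1.val < i - 1 := mem_verts_iff.mp (Xset_sub v.2)
      simp only [hres, dif_pos hlt]
      exact hcz v.1 v.2 _
  · -- left inverse
    intro c hc
    rw [Finset.mem_filter, Finset.mem_filter] at hc
    obtain ⟨⟨-, -, hcx⟩, -⟩ := hc
    funext v
    by_cases h : v.1.val < i - 1
    · simp only [dif_pos h]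
    · simp only [dif_neg h]
      exact (hcx v.1 (last_mem_Xset v.2 h) v.2).symm
  · -- right inverse
    intro c' hc'
    funext v
    have hlt : v.1.val < i - 1 := mem_verts_iff.mp v.2
    simp only [dif_pos hlt]
end

section
/- Let q, k ∈ ℕ with q ≥ 3 and let a ∈ Fin q. Consider the graph G with vertex set {b, b'} ∪ {s_i : 2 ≤ i ≤ q} ∪ {t_i : 2 ≤ i ≤ q}, edges {b s_i}, {b' s_i} and {s_i t_j} for all 2 ≤ i, j ≤ q, and lists L(b) = Fin q (all colors), L(b') = {1, 2}, L(s_i) = L(t_i) = {1, i}. Assume a = 1 (the general case follows by relabeling). Then: (i) for every color c_b ∈ Fin q there is exactly one list coloring c of G with c(b) = c_b; (ii) any list coloring c satisfies c(b') = 1 if c(b) = 1 and c(b') = 2 if c(b) ≠ 1. -/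
/-- Vertices of the color-reduction gadget: b, b', and s_i, t_i for i ∈ [2, q]
(indexed by j : Fin (q−1), with i = j + 2). -/
abbrev GadVtx (q : ℕ) := (Unit ⊕ Unit) ⊕ (Fin (q - 1) ⊕ Fin (q - 1))

def gadB (q : ℕ) : GadVtx q := Sum.inl (Sum.inl ())

def gadB' (q : ℕ) : GadVtx q := Sum.inl (Sum.inr ())

/-- Base edges: b s_i, b' s_i, and s_i t_j for all i, j ∈ [2, q]. -/
def gadEdge (q : ℕ) : GadVtx q → GadVtx q → Prop
  | Sum.inl _, Sum.inr (Sum.inl _) => True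
  | Sum.inr (Sum.inl _), Sum.inr (Sum.inr _) => True
  | _, _ => False

/-- Adjacency: symmetrization of the base edges. -/
def gadAdj (q : ℕ) (u v : GadVtx q) : Prop := gadEdge q u v ∨ gadEdge q v u

/-- Lists (colors are {1, …, q} ⊆ ℕ): L(b) = [q], L(b') = {1,2},
L(s_i) = L(t_i) = {1, i} with i = j + 2. -/
def gadList (q : ℕ) : GadVtx q → Finset ℕ
  | Sum.inl (Sum.inl _) => Finset.Icc 1 q
  | Sum.inl (Sum.inr _) => {1, 2}
  | Sum.inr (Sum.inl j) => {1, j.val + 2}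
  | Sum.inr (Sum.inr j) => {1, j.val + 2}

/-- A list coloring of the gadget. -/
def gadColoring (q : ℕ) (c : GadVtx q → ℕ) : Prop :=
  (∀ v, c v ∈ gadList q v) ∧ ∀ u v, gadAdj q u v → c u ≠ c v

lemma gadKey (q : ℕ) (hq : 3 ≤ q) (c : GadVtx q → ℕ) (hc : gadColoring q c) :
    (c (gadB q) = 1 ∧ c (gadB' q) = 1 ∧
      ∀ j : Fin (q-1), c (Sum.inr (Sum.inl j)) = j.val + 2 ∧ c (Sum.inr (Sum.inr j)) = 1)
    ∨ (c (gadB q) ≠ 1 ∧ c (gadB' q) = 2 ∧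
      ∀ j : Fin (q-1), c (Sum.inr (Sum.inl j)) = 1 ∧ c (Sum.inr (Sum.inr j)) = j.val + 2) := by
  obtain ⟨hmem, hadj⟩ := hc
  have h0 : (0 : ℕ) < q - 1 := by omega
  have hst : ∀ i j : Fin (q-1), c (Sum.inr (Sum.inl i)) ≠ c (Sum.inr (Sum.inr j)) :=
    fun i j => hadj _ _ (Or.inl trivial)
  have hbs : ∀ j : Fin (q-1), c (gadB q) ≠ c (Sum.inr (Sum.inl j)) :=
    fun j => hadj _ _ (Or.inl trivial)
  have hb's : ∀ j : Fin (q-1), c (gadB' q) ≠ c (Sum.inr (Sum.inl j)) :=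
    fun j => hadj _ _ (Or.inl trivial)
  have hms : ∀ j : Fin (q-1), c (Sum.inr (Sum.inl j)) = 1 ∨ c (Sum.inr (Sum.inl j)) = j.val + 2 := by
    intro j; have := hmem (Sum.inr (Sum.inl j)); simpa [gadList] using this
  have hmt : ∀ j : Fin (q-1), c (Sum.inr (Sum.inr j)) = 1 ∨ c (Sum.inr (Sum.inr j)) = j.val + 2 := by
    intro j; have := hmem (Sum.inr (Sum.inr j)); simpa [gadList] using this
  have hmb : 1 ≤ c (gadB q) ∧ c (gadB q) ≤ q := by
    have := hmem (gadB q); simpa [gadB, gadList, Finset.mem_Icc] using this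
  have hmb' : c (gadB' q) = 1 ∨ c (gadB' q) = 2 := by
    have := hmem (gadB' q); simpa [gadB', gadList] using this
  have ht0 : c (Sum.inr (Sum.inr ⟨0, h0⟩)) = 1 ∨ c (Sum.inr (Sum.inr ⟨0, h0⟩)) = 2 := by
    simpa using hmt ⟨0, h0⟩
  rcases ht0 with ht0 | ht0
  · -- t0 = 1 : case A
    left
    have hs : ∀ j : Fin (q-1), c (Sum.inr (Sum.inl j)) = j.val + 2 := by
      intro j
      rcases hms j with h | h
      · exact absurd (h.trans ht0.symm) (hst j ⟨0, h0⟩)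
      · exact h
    have ht : ∀ j : Fin (q-1), c (Sum.inr (Sum.inr j)) = 1 := by
      intro j
      rcases hmt j with h | h
      · exact h
      · exact absurd ((hs j).trans h.symm) (hst j j)
    have hb : c (gadB q) = 1 := by
      by_contra hb1
      have h2 : 2 ≤ c (gadB q) := by omega
      have hlt : c (gadB q) - 2 < q - 1 := by omega
      have := hbs ⟨c (gadB q) - 2, hlt⟩
      rw [hs ⟨c (gadB q) - 2, hlt⟩] at this
      simp at this; omega
    refine ⟨hb, ?_, fun j => ⟨hs j, ht j⟩⟩
    rcases hmb' with h | h
    · exact h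
    · exfalso
      have := hb's ⟨0, h0⟩
      rw [hs ⟨0, h0⟩] at this
      simp [h] at this
  · -- t0 = 2 : case B
    right
    have hs0 : c (Sum.inr (Sum.inl ⟨0, h0⟩)) = 1 := by
      rcases hms ⟨0, h0⟩ with h | h
      · exact h
      · simp at h
        exact absurd (h.trans ht0.symm) (hst ⟨0, h0⟩ ⟨0, h0⟩)
    have ht : ∀ j : Fin (q-1), c (Sum.inr (Sum.inr j)) = j.val + 2 := by
      intro j
      rcases hmt j with h | h
      · exact absurd (hs0.trans h.symm) (hst ⟨0, h0⟩ j)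
      · exact h
    have hs : ∀ j : Fin (q-1), c (Sum.inr (Sum.inl j)) = 1 := by
      intro j
      rcases hms j with h | h
      · exact h
      · exact absurd (h.trans (ht j).symm) (hst j j)
    have hb : c (gadB q) ≠ 1 := by
      have := hbs ⟨0, h0⟩; rw [hs ⟨0, h0⟩] at this; exact this
    refine ⟨hb, ?_, fun j => ⟨hs j, ht j⟩⟩
    rcases hmb' with h | h
    · exfalso
      have := hb's ⟨0, h0⟩; rw [hs ⟨0, h0⟩] at this; exact this h
    · exact h

def gadCA (q : ℕ) : GadVtx q → ℕ
  | Sum.inl _ => 1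
  | Sum.inr (Sum.inl j) => j.val + 2
  | Sum.inr (Sum.inr _) => 1

def gadCB (q cb : ℕ) : GadVtx q → ℕ
  | Sum.inl (Sum.inl _) => cb
  | Sum.inl (Sum.inr _) => 2
  | Sum.inr (Sum.inl _) => 1
  | Sum.inr (Sum.inr j) => j.val + 2

lemma gadCA_coloring (q : ℕ) (hq : 3 ≤ q) : gadColoring q (gadCA q) := by
  constructor
  · rintro ((⟨⟩ | ⟨⟩) | (j | j)) <;> simp [gadCA, gadList] <;> omega
  · rintro ((⟨⟩ | ⟨⟩) | (i | i)) ((⟨⟩ | ⟨⟩) | (j | j)) (h | h) <;>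
      simp only [gadAdj, gadEdge] at h ⊢ <;> simp only [gadCA] <;> omega

lemma gadCB_coloring (q cb : ℕ) (hq : 3 ≤ q) (h2 : 2 ≤ cb) (hcb : cb ≤ q) :
    gadColoring q (gadCB q cb) := by
  constructor
  · rintro ((⟨⟩ | ⟨⟩) | (j | j)) <;> simp [gadCB, gadList] <;> omega
  · rintro ((⟨⟩ | ⟨⟩) | (i | i)) ((⟨⟩ | ⟨⟩) | (j | j)) (h | h) <;>
      simp only [gadAdj, gadEdge] at h ⊢ <;> simp only [gadCB] <;> omega

/-- The color-reduction gadget (case a = 1): (i) each color c_b ∈ [q] for b extends to a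
unique list coloring; (ii) every list coloring c satisfies c(b') = 1 if c(b) = 1 and
c(b') = 2 if c(b) ≠ 1. -/
theorem stmt14 (q k : ℕ) (hq : 3 ≤ q) :
    (∀ cb ∈ Finset.Icc 1 q,
      ∃! c : GadVtx q → ℕ, gadColoring q c ∧ c (gadB q) = cb) ∧
    (∀ c : GadVtx q → ℕ, gadColoring q c →
      (c (gadB q) = 1 → c (gadB' q) = 1) ∧ (c (gadB q) ≠ 1 → c (gadB' q) = 2)) := by
  constructor
  · intro cb hcb
    rw [Finset.mem_Icc] at hcb
    by_cases h1 : cb = 1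
    · subst h1
      refine ⟨gadCA q, ⟨gadCA_coloring q hq, rfl⟩, ?_⟩
      rintro c ⟨hc, hb⟩
      rcases gadKey q hq c hc with ⟨_, hb', hst⟩ | ⟨hb1, _, _⟩
      · funext v
        rcases v with (⟨⟩ | ⟨⟩) | (j | j)
        · exact hb
        · exact hb'.trans rfl
        · exact (hst j).1
        · exact (hst j).2
      · exact absurd hb hb1
    · refine ⟨gadCB q cb, ⟨gadCB_coloring q cb hq (by omega) hcb.2, rfl⟩, ?_⟩
      rintro c ⟨hc, hb⟩
      rcases gadKey q hq c hc with ⟨hb1, _, _⟩ | ⟨_, hb', hst⟩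
      · exact absurd (hb ▸ hb1) h1
      · funext v
        rcases v with (⟨⟩ | ⟨⟩) | (j | j)
        · exact hb
        · exact hb'
        · exact (hst j).1
        · exact (hst j).2
  · intro c hc
    rcases gadKey q hq c hc with ⟨hb, hb', _⟩ | ⟨hb, hb', _⟩
    · exact ⟨fun _ => hb', fun h => absurd hb h⟩
    · exact ⟨fun h => absurd h hb, fun _ => hb'⟩
end

section
/- Deletion of a helper construction: Let G be a graph with lists L and let G' be obtained from G by adding, for each i ∈ [n], a q-clique on new vertices {u_c^i : c ∈ Fin q}, adding edges u_c^i u_{c'}^{i+1} for all c ≠ c' (for i < n), and edges u_c^i v_i for all c ∉ L(v_i). Then the number of list colorings of (G, L) equals the number of essentially distinct proper q-colorings of G', and G' is not (q−1)-colorable. -/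
/-- The graph G' of Corollary 4.6: G together with, for each i, a q-clique on the new
vertices u_c^i = (i, c); edges u_c^i u_{c'}^{i+1} for c ≠ c'; and edges u_c^i v_i for
every color c not in the list of v_i. -/
def Gprime {n q : ℕ} (G : SimpleGraph (Fin n)) (L : Fin n → Finset (Fin q)) :
    SimpleGraph (Fin n ⊕ Fin n × Fin q) :=
  SimpleGraph.fromRel fun u v =>
    match u, v with
    | Sum.inl a, Sum.inl b => G.Adj a b
    | Sum.inr (i, c), Sum.inr (j, c') => (i = j ∨ j.val = i.val + 1) ∧ c ≠ c'
    | Sum.inr (i, c), Sum.inl a => a = i ∧ c ∉ L i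
    | Sum.inl _, Sum.inr _ => False

namespace Stmt16Aux

variable {n q : ℕ} {G : SimpleGraph (Fin n)} {L : Fin n → Finset (Fin q)}

lemma adj_clique {i : Fin n} {c c' : Fin q} (h : c ≠ c') :
    (Gprime G L).Adj (.inr (i, c)) (.inr (i, c')) := by
  rw [Gprime, SimpleGraph.fromRel_adj]
  exact ⟨by simp [h], Or.inl ⟨Or.inl rfl, h⟩⟩

lemma adj_next {i j : Fin n} (hj : j.val = i.val + 1) {c c' : Fin q} (h : c ≠ c') :
    (Gprime G L).Adj (.inr (i, c)) (.inr (j, c')) := by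
  rw [Gprime, SimpleGraph.fromRel_adj]
  refine ⟨?_, Or.inl ⟨Or.inr hj, h⟩⟩
  intro he
  rw [Sum.inr.injEq, Prod.mk.injEq] at he
  have := congrArg Fin.val he.1
  omega

lemma adj_list {i : Fin n} {c : Fin q} (h : c ∉ L i) :
    (Gprime G L).Adj (.inr (i, c)) (.inl i) := by
  rw [Gprime, SimpleGraph.fromRel_adj]
  exact ⟨by simp, Or.inl ⟨rfl, h⟩⟩

lemma adj_base {a b : Fin n} (h : G.Adj a b) :
    (Gprime G L).Adj (.inl a) (.inl b) := by
  rw [Gprime, SimpleGraph.fromRel_adj]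
  exact ⟨by simpa using h.ne, Or.inl h⟩

variable {f : Fin n ⊕ Fin n × Fin q → Fin q}

lemma clique_bij (hf : ∀ u v, (Gprime G L).Adj u v → f u ≠ f v) (i : Fin n) :
    Function.Bijective (fun c => f (.inr (i, c))) := by
  rw [← Finite.injective_iff_bijective]
  intro c c' h
  by_contra hne
  exact hf _ _ (adj_clique hne) h

lemma step (hf : ∀ u v, (Gprime G L).Adj u v → f u ≠ f v) {i j : Fin n}
    (hj : j.val = i.val + 1) (c : Fin q) :
    f (.inr (i, c)) = f (.inr (j, c)) := by
  obtain ⟨c'', hc''⟩ := (clique_bij hf j).2 (f (.inr (i, c)))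
  have hc2 : f (.inr (j, c'')) = f (.inr (i, c)) := hc''
  rcases eq_or_ne c'' c with rfl | hne
  · exact hc2.symm
  · exact absurd hc2.symm (hf _ _ (adj_next hj hne.symm))

lemma all_eq (hf : ∀ u v, (Gprime G L).Adj u v → f u ≠ f v) (hn : 0 < n)
    (i : Fin n) (c : Fin q) :
    f (.inr (i, c)) = f (.inr (⟨0, hn⟩, c)) := by
  obtain ⟨k, hk⟩ := i
  induction k with
  | zero => rfl
  | succ m ih =>
    have hm : m < n := Nat.lt_of_succ_lt hk
    rw [← step hf (i := ⟨m, hm⟩) (j := ⟨m + 1, hk⟩) rfl c, ih hm]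

/-- The subtype of proper colorings of `Gprime G L`. -/
abbrev T (G : SimpleGraph (Fin n)) (L : Fin n → Finset (Fin q)) :=
  {c : Fin n ⊕ Fin n × Fin q → Fin q // ∀ u v, (Gprime G L).Adj u v → c u ≠ c v}

/-- The permutation of colors realized on the first clique. -/
noncomputable def pi (hn : 0 < n) (t : T G L) : Equiv.Perm (Fin q) :=
  Equiv.ofBijective _ (clique_bij t.2 ⟨0, hn⟩)

lemma pi_apply (hn : 0 < n) (t : T G L) (c : Fin q) :
    pi hn t c = t.1 (.inr (⟨0, hn⟩, c)) := rfl

lemma pi_apply' (hn : 0 < n) (t : T G L) (i : Fin n) (c : Fin q) :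
    pi hn t c = t.1 (.inr (i, c)) := (all_eq t.2 hn i c).symm

end Stmt16Aux

/-- The number of list colorings of (G, L) equals the number of essentially distinct
proper q-colorings of G' (orbits under color permutations), and G' is not
(q−1)-colorable. -/
theorem stmt16 (n q : ℕ) (hn : 0 < n) (G : SimpleGraph (Fin n))
    (L : Fin n → Finset (Fin q)) :
    Nat.card {c : Fin n → Fin q //
        (∀ v, c v ∈ L v) ∧ ∀ u v, G.Adj u v → c u ≠ c v} =
      Nat.card (Quot (fun c c' :
          {c : Fin n ⊕ Fin n × Fin q → Fin q //
            ∀ u v, (Gprime G L).Adj u v → c u ≠ c v} =>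
        ∃ π : Equiv.Perm (Fin q), c.1 = π ∘ c'.1)) ∧
    ¬ (Gprime G L).Colorable (q - 1) := by
  open Stmt16Aux in
  constructor
  · set r : T G L → T G L → Prop :=
      fun c c' => ∃ π : Equiv.Perm (Fin q), c.1 = π ∘ c'.1 with hr
    -- the forward map
    have Fprop : ∀ c : {c : Fin n → Fin q //
        (∀ v, c v ∈ L v) ∧ ∀ u v, G.Adj u v → c u ≠ c v},
        ∀ u v, (Gprime G L).Adj u v →
          Sum.elim c.1 (fun p : Fin n × Fin q => p.2) u ≠
          Sum.elim c.1 (fun p : Fin n × Fin q => p.2) v := by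
      rintro c (a | ⟨i, ci⟩) (b | ⟨j, cj⟩) hadj <;>
        rw [Gprime, SimpleGraph.fromRel_adj] at hadj
      · obtain ⟨-, h | h⟩ := hadj
        · exact c.2.2 _ _ h
        · exact (c.2.2 _ _ h).symm
      · obtain ⟨-, h | h⟩ := hadj
        · exact h.elim
        · obtain ⟨rfl, hmem⟩ := h
          simp only [Sum.elim_inl, Sum.elim_inr]
          intro he
          exact hmem (he ▸ c.2.1 a)
      · obtain ⟨-, h | h⟩ := hadj
        · obtain ⟨rfl, hmem⟩ := h
          simp only [Sum.elim_inl, Sum.elim_inr]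
          intro he
          exact hmem (he.symm ▸ c.2.1 b)
        · exact h.elim
      · obtain ⟨-, ⟨-, h⟩ | ⟨-, h⟩⟩ := hadj
        · exact h
        · exact h.symm
    -- the backward map
    have gprop : ∀ t : T G L,
        (∀ v, (pi hn t).symm (t.1 (.inl v)) ∈ L v) ∧
        ∀ u v, G.Adj u v →
          (pi hn t).symm (t.1 (.inl u)) ≠ (pi hn t).symm (t.1 (.inl v)) := by
      intro t
      constructor
      · intro v
        by_contra h
        have hadj := t.2 _ _ (adj_list (L := L) (i := v) h)
        apply hadj
        rw [← pi_apply' hn t v, Equiv.apply_symm_apply]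
      · intro u v h he
        exact t.2 _ _ (adj_base h) ((pi hn t).symm.injective.eq_iff.mp he)
    set g : T G L → {c : Fin n → Fin q //
        (∀ v, c v ∈ L v) ∧ ∀ u v, G.Adj u v → c u ≠ c v} :=
      fun t => ⟨fun v => (pi hn t).symm (t.1 (.inl v)), gprop t⟩ with hg
    have hginv : ∀ t t' : T G L, r t t' → g t = g t' := by
      rintro t t' ⟨π, hπ⟩
      apply Subtype.ext; funext v
      simp only [hg]
      apply (pi hn t).injective
      rw [Equiv.apply_symm_apply]
      have h1 : pi hn t ((pi hn t').symm (t'.1 (.inl v)))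
          = π (pi hn t' ((pi hn t').symm (t'.1 (.inl v)))) := by
        rw [pi_apply, pi_apply, hπ]; rfl
      rw [h1, Equiv.apply_symm_apply, hπ]; rfl
    refine Nat.card_congr
      ⟨fun c => Quot.mk r ⟨Sum.elim c.1 (fun p : Fin n × Fin q => p.2), Fprop c⟩,
       Quot.lift g hginv, ?_, ?_⟩
    · -- left inverse
      intro c
      set t : T G L := ⟨Sum.elim c.1 (fun p : Fin n × Fin q => p.2), Fprop c⟩
      have hid : ∀ d, pi hn t d = d := fun d => rfl
      have hids : ∀ d, (pi hn t).symm d = d := by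
        intro d
        apply (pi hn t).injective
        rw [Equiv.apply_symm_apply, hid]
      show g t = c
      apply Subtype.ext; funext v
      simp only [hg, hids]
      rfl
    · -- right inverse
      apply Quot.ind
      intro t
      show Quot.mk r ⟨Sum.elim (g t).1 (fun p : Fin n × Fin q => p.2), _⟩ = Quot.mk r t
      refine (Quot.sound ⟨pi hn t, ?_⟩).symm
      funext u
      rcases u with v | ⟨i, d⟩
      · simp only [Function.comp_apply, Sum.elim_inl, hg, Equiv.apply_symm_apply]
      · simp only [Function.comp_apply, Sum.elim_inr]
        exact (pi_apply' hn t i d).symm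
  · rintro ⟨C⟩
    rcases q with _ | q
    · exact Fin.elim0 (C (Sum.inl ⟨0, hn⟩))
    · have hinj : Function.Injective (fun c : Fin (q + 1) =>
          C (Sum.inr (⟨0, hn⟩, c))) := by
        intro c c' h
        by_contra hne
        exact C.valid (adj_clique hne) h
      have := Fintype.card_le_of_injective _ hinj
      simp at this
end
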